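/- The polynomials P_d satisfy P_1(X) = 1, P_2(X) = 2X, and the recursion P_{d+2}(X) = (2X/(d+1)) P_{d+1}(X) + P_d(X) for every integer d ≥ 1. -/

import Mathlib

/-!
Write `e_n = 2^n/n! · (X-1)(X-2)⋯(X-n)`. Reindexing `δ = n + 1` shows `P_m = Σ_n C(m, n+1) e_n`,
and `X · (X-1)⋯(X-n) = (X-1)⋯(X-n-1) + (n+1) · (X-1)⋯(X-n)` gives
`2X e_n = (n+1) e_{n+1} + 2(n+1) e_n`. Comparing coefficients of `e_n`, the recursion
`(d+1) P_{d+2} = 2X P_{d+1} + (d+1) P_d` becomes the binomial identity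
`(d+1) C(d+2, n+1) = n C(d+1, n) + 2(n+1) C(d+1, n+1) + (d+1) C(d, n+1)`,
which follows from Pascal's rule and `(k+1) C(d+1, k+1) = (d+1) C(d, k)`.
-/

open Polynomial Finset

noncomputable section

/-- The polynomial `P_d(X) = Σ_{δ=1}^d binom(d,δ) 2^{δ-1} (∏_{k=1}^{δ-1}(X−k))/(δ−1)!`,
with the empty product equal to `1` for `δ = 1`. -/
def Ppoly (d : ℕ) : Polynomial ℝ :=
  ∑ δ ∈ Finset.Icc 1 d,
    Polynomial.C ((d.choose δ : ℝ) * 2 ^ (δ - 1) / (Nat.factorial (δ - 1) : ℝ)) *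
      ∏ k ∈ Finset.Icc 1 (δ - 1), (Polynomial.X - Polynomial.C (k : ℝ))

theorem Nat.add_one_mul_choose_add_two_eq (d n : ℕ) :
    (d + 1) * (d + 2).choose (n + 1) =
      n * (d + 1).choose n + 2 * (n + 1) * (d + 1).choose (n + 1) + (d + 1) * d.choose (n + 1) := by
  rcases n with _ | k
  · simp only [zero_add, Nat.choose_one_right, Nat.choose_zero_right, mul_one]
    ring
  · have h₁ := Nat.add_one_mul_choose_eq d k
    have h₂ := Nat.add_one_mul_choose_eq d (k + 1)
    have p₁ := Nat.choose_succ_succ' (d + 1) (k + 1)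
    have p₂ := Nat.choose_succ_succ' d k
    have p₃ := Nat.choose_succ_succ' d (k + 1)
    linear_combination (exp := 1) (d + 1) * (p₁ + p₂ + p₃) + h₁ + 2 * h₂

namespace Ppoly

open Nat

def basis (n : ℕ) : ℝ[X] := C (2 ^ n / n ! : ℝ) * ∏ k ∈ Icc 1 n, (X - C (k : ℝ))

theorem two_mul_X_mul_basis (n : ℕ) :
    C 2 * X * basis n = (n + 1) • basis (n + 1) + (2 * (n + 1)) • basis n := by
  have hcoeff : ((n : ℝ) + 1) * (2 ^ (n + 1) / (n + 1)!) = 2 * (2 ^ n / n !) := by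
    rw [factorial_succ]; push_cast; field_simp; ring
  replace hcoeff := congrArg C hcoeff
  simp only [basis, prod_Icc_succ_top (Nat.le_add_left 1 n), nsmul_eq_mul, map_mul, map_add,
    map_natCast, map_one, map_ofNat, Nat.cast_add, Nat.cast_mul, Nat.cast_one, Nat.cast_ofNat]
    at hcoeff ⊢
  linear_combination -(∏ k ∈ Icc 1 n, (X - (k : ℝ[X]))) * (X - ((n : ℝ[X]) + 1)) * hcoeff

theorem eq_sum_basis {m N : ℕ} (h : m ≤ N) :
    Ppoly m = ∑ n ∈ range N, m.choose (n + 1) • basis n := by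
  have hreindex : Ppoly m = ∑ n ∈ range m, m.choose (n + 1) • basis n := by
    rw [Ppoly, ← Ico_add_one_right_eq_Icc, sum_Ico_eq_sum_range, add_tsub_cancel_right]
    refine sum_congr rfl fun n _ => ?_
    rw [add_tsub_cancel_left, add_comm 1 n, basis, nsmul_eq_mul, ← map_natCast C, mul_div_assoc,
      C_mul, mul_assoc]
  rw [hreindex]
  refine sum_subset (range_subset_range.2 h) fun n _ hn => ?_
  rw [Nat.choose_eq_zero_of_lt (by simpa using hn), zero_smul]

theorem two_mul_X_mul_eq_sum_basis {m N : ℕ} (h : m ≤ N) :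
    C 2 * X * Ppoly m =
      ∑ n ∈ range (N + 1), (n * m.choose n + 2 * (n + 1) * m.choose (n + 1)) • basis n := by
  rw [eq_sum_basis h, mul_sum]
  simp_rw [mul_smul_comm, two_mul_X_mul_basis, smul_add, smul_smul, add_smul, sum_add_distrib]
  congr 1
  · rw [sum_range_succ' _ N, zero_mul, zero_smul, add_zero]
    exact sum_congr rfl fun n _ => by rw [mul_comm]
  · rw [sum_range_succ, Nat.choose_eq_zero_of_lt (by omega : m < N + 1), mul_zero, zero_smul,
      add_zero]
    exact sum_congr rfl fun n _ => by rw [mul_comm]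

theorem add_one_smul_add_two (d : ℕ) :
    (d + 1) • Ppoly (d + 2) = C 2 * X * Ppoly (d + 1) + (d + 1) • Ppoly d := by
  rw [eq_sum_basis le_rfl, two_mul_X_mul_eq_sum_basis le_rfl, eq_sum_basis (by omega : d ≤ d + 2),
    smul_sum, smul_sum, ← sum_add_distrib]
  refine sum_congr rfl fun n _ => ?_
  rw [smul_smul, smul_smul, ← add_smul, Nat.add_one_mul_choose_add_two_eq]

end Ppoly

theorem stmt10 :
    Ppoly 1 = 1 ∧ Ppoly 2 = Polynomial.C 2 * Polynomial.X ∧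
    ∀ d : ℕ, 1 ≤ d →
      Ppoly (d + 2) =
        Polynomial.C (2 / ((d : ℝ) + 1)) * Polynomial.X * Ppoly (d + 1) + Ppoly d := by
  refine ⟨?_, ?_, fun d _ => ?_⟩
  · simp [Ppoly.eq_sum_basis le_rfl, Ppoly.basis]
  · simp [Ppoly.eq_sum_basis le_rfl, Ppoly.basis, sum_range_succ, map_ofNat]
    ring
  · have hd : ((d : ℝ) + 1) ≠ 0 := by positivity
    apply smul_right_injective ℝ[X] hd
    have hsmul := Ppoly.add_one_smul_add_two d
    simp only [← Nat.cast_smul_eq_nsmul ℝ, Nat.cast_add, Nat.cast_one] at hsmul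
    simp only [hsmul, smul_add, smul_eq_C_mul, ← mul_assoc, ← C_mul, mul_div_cancel₀ _ hd]
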